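/- arXiv:cs/0207071 — 5 statements merged into one kernel-verified Lean document; each statement's English description precedes it below -/
import Mathlib

section
/- Characterisation via equilibrium models: for any nested logic program Π over alphabet A and any I ⊆ A, I is an answer set of Π if and only if ⟨I, I⟩ is an equilibrium model of the set of formulas {B(r) → H(r) : r ∈ Π}, i.e., ⟨I, I⟩ is an HT-model of this set and for every proper subset J ⊂ I, ⟨J, I⟩ is not an HT-model of it. -/
inductive Form (α : Type) : Type
  | top : Form α
  | bot : Form α
  | atom : α → Form α
  | neg : Form α → Form α
  | and : Form α → Form α → Form α
  | or : Form α → Form α → Form α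
  | imp : Form α → Form α → Form α

variable {α : Type}

/-- Truth at world `w` (`false` = "here" H, `true` = "there" T) in the
HT-interpretation `⟨IH, IT⟩` under here-and-there Kripke semantics. -/
def htSat (IH IT : Set α) : Bool → Form α → Prop
  | _, .top => True
  | _, .bot => False
  | w, .atom a => a ∈ (if w then IT else IH)
  | w, .neg φ => ∀ u, w ≤ u → ¬ htSat IH IT u φ
  | w, .and φ ψ => htSat IH IT w φ ∧ htSat IH IT w ψ
  | w, .or φ ψ => htSat IH IT w φ ∨ htSat IH IT w ψ
  | w, .imp φ ψ => ∀ u, w ≤ u → (htSat IH IT u φ → htSat IH IT u ψ)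

/-- Classical truth under interpretation `I`. -/
def clSat (I : Set α) : Form α → Prop
  | .top => True
  | .bot => False
  | .atom a => a ∈ I
  | .neg φ => ¬ clSat I φ
  | .and φ ψ => clSat I φ ∧ clSat I ψ
  | .or φ ψ => clSat I φ ∨ clSat I ψ
  | .imp φ ψ => clSat I φ → clSat I ψ

open Classical in
/-- The reduct of a formula w.r.t. `I`: every maximal occurrence of `¬ψ`
is replaced by `⊥` if `ψ` is classically true under `I`, else by `⊤`. -/
noncomputable def reduct (I : Set α) : Form α → Form α
  | .neg φ => if clSat I φ then .bot else .top
  | .and φ ψ => .and (reduct I φ) (reduct I ψ)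
  | .or φ ψ => .or (reduct I φ) (reduct I ψ)
  | .imp φ ψ => .imp (reduct I φ) (reduct I ψ)
  | .top => .top
  | .bot => .bot
  | .atom a => .atom a

/-- A rule is a pair `(head, body)`; a program is a set of rules. -/
abbrev Program (α : Type) := Set (Form α × Form α)

/-- `I` is a classical model of the program (of the implications body → head). -/
def clModelProg (I : Set α) (P : Program α) : Prop :=
  ∀ r ∈ P, clSat I (.imp r.2 r.1)

/-- `⟨IH, IT⟩` is an HT-model of the program. -/
def htModelProg (IH IT : Set α) (P : Program α) : Prop :=
  ∀ r ∈ P, htSat IH IT false (.imp r.2 r.1)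

/-- The reduct of a program. -/
noncomputable def progReduct (I : Set α) (P : Program α) : Program α :=
  (fun r => (reduct I r.1, reduct I r.2)) '' P

/-- `I` is an answer set of `P`: a ⊆-minimal classical model of the reduct `P^I`. -/
def isAnswerSet (I : Set α) (P : Program α) : Prop :=
  clModelProg I (progReduct I P) ∧ ∀ J ⊂ I, ¬ clModelProg J (progReduct I P)

/-- Expressions: formulas built without `→`. -/
def IsExpr : Form α → Prop
  | .imp _ _ => False
  | .neg φ => IsExpr φ
  | .and φ ψ => IsExpr φ ∧ IsExpr ψ
  | .or φ ψ => IsExpr φ ∧ IsExpr ψ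
  | _ => True

/-- All heads and bodies of `P` are expressions. -/
def ExprProg (P : Program α) : Prop := ∀ r ∈ P, IsExpr r.1 ∧ IsExpr r.2

/-- Atoms occurring in a formula. -/
def atoms : Form α → Set α
  | .atom a => {a}
  | .neg φ => atoms φ
  | .and φ ψ => atoms φ ∪ atoms ψ
  | .or φ ψ => atoms φ ∪ atoms ψ
  | .imp φ ψ => atoms φ ∪ atoms ψ
  | _ => ∅


lemma htSat_mono {J I : Set α} (h : J ⊆ I) :
    ∀ φ : Form α, htSat J I false φ → htSat J I true φ := by
  intro φ
  induction φ with
  | top => simp [htSat]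
  | bot => simp [htSat]
  | atom a => simp only [htSat, if_true, if_false]; exact fun ha => h ha
  | neg φ ih => intro hf u hu; exact hf u (Bool.false_le u)
  | and φ ψ ihφ ihψ => rintro ⟨h1, h2⟩; exact ⟨ihφ h1, ihψ h2⟩
  | or φ ψ ihφ ihψ => rintro (h1 | h2); exacts [Or.inl (ihφ h1), Or.inr (ihψ h2)]
  | imp φ ψ ihφ ihψ => intro hf u hu; exact hf u (Bool.false_le u)

lemma htSat_true {J I : Set α} :
    ∀ φ : Form α, htSat J I true φ ↔ clSat I φ := by
  intro φ
  induction φ with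
  | top => simp [htSat, clSat]
  | bot => simp [htSat, clSat]
  | atom a => simp [htSat, clSat]
  | neg φ ih =>
    constructor
    · intro hf hc; exact hf true (le_refl _) (ih.mpr hc)
    · intro hc u hu
      cases u
      · exact absurd hu (by decide)
      · exact fun hs => hc (ih.mp hs)
  | and φ ψ ihφ ihψ => simp [htSat, clSat, ihφ, ihψ]
  | or φ ψ ihφ ihψ => simp [htSat, clSat, ihφ, ihψ]
  | imp φ ψ ihφ ihψ =>
    constructor
    · intro hf hb; exact ihψ.mp (hf true (le_refl _) (ihφ.mpr hb))
    · intro hc u hu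
      cases u
      · exact absurd hu (by decide)
      · exact fun hb => ihψ.mpr (hc (ihφ.mp hb))

lemma htSat_false_reduct {J I : Set α} (h : J ⊆ I) :
    ∀ φ : Form α, IsExpr φ → (htSat J I false φ ↔ clSat J (reduct I φ)) := by
  intro φ
  induction φ with
  | top => intro _; simp [htSat, clSat, reduct]
  | bot => intro _; simp [htSat, clSat, reduct]
  | atom a => intro _; simp [htSat, clSat, reduct]
  | neg φ ih =>
    intro hexpr
    unfold reduct
    by_cases hc : clSat I φ
    · simp only [hc, if_pos]
      constructor
      · intro hf; exact absurd (htSat_true φ |>.mpr hc) (hf true (Bool.false_le _))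
      · intro hf; exact absurd hf (by simp [clSat])
    · simp only [hc, if_neg, not_false_iff]
      constructor
      · intro _; trivial
      · intro _ u hu hs
        cases u
        · exact hc ((htSat_true φ).mp (htSat_mono h φ hs))
        · exact hc ((htSat_true φ).mp hs)
  | and φ ψ ihφ ihψ =>
    rintro ⟨h1, h2⟩
    show htSat J I false φ ∧ htSat J I false ψ ↔ clSat J (reduct I φ) ∧ clSat J (reduct I ψ)
    rw [ihφ h1, ihψ h2]
  | or φ ψ ihφ ihψ =>
    rintro ⟨h1, h2⟩
    show htSat J I false φ ∨ htSat J I false ψ ↔ clSat J (reduct I φ) ∨ clSat J (reduct I ψ)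
    rw [ihφ h1, ihψ h2]
  | imp φ ψ ihφ ihψ => intro hexpr; exact absurd hexpr (by simp [IsExpr])

lemma clSat_reduct {I : Set α} :
    ∀ φ : Form α, IsExpr φ → (clSat I (reduct I φ) ↔ clSat I φ) := by
  intro φ
  induction φ with
  | top => intro _; simp [clSat, reduct]
  | bot => intro _; simp [clSat, reduct]
  | atom a => intro _; simp [clSat, reduct]
  | neg φ ih =>
    intro hexpr
    unfold reduct
    by_cases hc : clSat I φ
    · simp only [hc, if_pos]
      constructor
      · intro hf; exact absurd hf (by simp [clSat])
      · intro hf; exact absurd hc hf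
    · simp only [hc, if_neg, not_false_iff]
      constructor
      · intro _; exact hc
      · intro _; trivial
  | and φ ψ ihφ ihψ =>
    rintro ⟨h1, h2⟩
    show clSat I (reduct I φ) ∧ clSat I (reduct I ψ) ↔ _
    rw [ihφ h1, ihψ h2]; rfl
  | or φ ψ ihφ ihψ =>
    rintro ⟨h1, h2⟩
    show clSat I (reduct I φ) ∨ clSat I (reduct I ψ) ↔ _
    rw [ihφ h1, ihψ h2]; rfl
  | imp φ ψ ihφ ihψ => intro hexpr; exact absurd hexpr (by simp [IsExpr])

lemma htSat_imp {J I : Set α} (B H : Form α) :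
    htSat J I false (.imp B H) ↔
      ((htSat J I false B → htSat J I false H) ∧ (htSat J I true B → htSat J I true H)) := by
  constructor
  · intro hf; exact ⟨hf false (le_refl _), hf true (Bool.false_le _)⟩
  · rintro ⟨h1, h2⟩ u hu
    cases u
    · exact h1
    · exact h2

/-- Answer sets coincide with equilibrium models: `I` is an answer set of `P`
iff `⟨I,I⟩` is an HT-model of `P` and no `⟨J,I⟩` with `J ⊊ I` is. -/
theorem stmt11 {α : Type} (P : Program α) (hfin : P.Finite)
    (hexpr : ExprProg P) (I : Set α) :
    isAnswerSet I P ↔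
      (htModelProg I I P ∧ ∀ J ⊂ I, ¬ htModelProg J I P) := by
  have hIcl_iff : clModelProg I (progReduct I P) ↔ (∀ r ∈ P, clSat I r.2 → clSat I r.1) := by
    constructor
    · intro hcl r hr hb
      have := hcl _ ⟨r, hr, rfl⟩
      exact (clSat_reduct r.1 (hexpr r hr).1).mp (this ((clSat_reduct r.2 (hexpr r hr).2).mpr hb))
    · rintro hmod r' ⟨r, hr, rfl⟩ hb
      exact (clSat_reduct r.1 (hexpr r hr).1).mpr
        (hmod r hr ((clSat_reduct r.2 (hexpr r hr).2).mp hb))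
  have hJ_iff : ∀ J : Set α, J ⊆ I → (∀ r ∈ P, clSat I r.2 → clSat I r.1) →
      (htModelProg J I P ↔ clModelProg J (progReduct I P)) := by
    intro J hJ hImod
    constructor
    · rintro hht r' ⟨r, hr, rfl⟩ hb
      have h1 := ((htSat_imp r.2 r.1).mp (hht r hr)).1
      exact (htSat_false_reduct hJ r.1 (hexpr r hr).1).mp
        (h1 ((htSat_false_reduct hJ r.2 (hexpr r hr).2).mpr hb))
    · intro hcl r hr
      rw [htSat_imp]
      constructor
      · intro hb
        exact (htSat_false_reduct hJ r.1 (hexpr r hr).1).mpr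
          (hcl _ ⟨r, hr, rfl⟩ ((htSat_false_reduct hJ r.2 (hexpr r hr).2).mp hb))
      · intro hb
        exact (htSat_true r.1).mpr (hImod r hr ((htSat_true r.2).mp hb))
  constructor
  · rintro ⟨hI, hmin⟩
    have hImod := hIcl_iff.mp hI
    refine ⟨(hJ_iff I (le_refl _) hImod).mpr hI, fun J hJ hht => hmin J hJ ?_⟩
    exact (hJ_iff J hJ.subset hImod).mp hht
  · rintro ⟨hI, hmin⟩
    have hImod : ∀ r ∈ P, clSat I r.2 → clSat I r.1 := by
      intro r hr hb
      have := ((htSat_imp r.2 r.1).mp (hI r hr)).2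
      exact (htSat_true r.1).mp (this ((htSat_true r.2).mpr hb))
    refine ⟨hIcl_iff.mpr hImod, fun J hJ hcl => hmin J hJ ?_⟩
    exact (hJ_iff J hJ.subset hImod).mpr hcl
end

section
/- For any HT-interpretation ⟨I_H, I_T⟩ and any program Π, ⟨I_H, I_T⟩ is an HT-model of Π (i.e., of {B(r)→H(r): r∈Π}) if and only if I_H is a classical model of the reduct Π^{I_T} and I_T is a classical model of Π. -/
variable {α : Type}

lemma true_le_iff (u : Bool) : true ≤ u ↔ u = true := by
  cases u <;> simp

lemma ht_true (IH IT : Set α) : ∀ φ : Form α, htSat IH IT true φ ↔ clSat IT φ := by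
  intro φ
  induction φ with
  | top => simp [htSat, clSat]
  | bot => simp [htSat, clSat]
  | atom a => simp [htSat, clSat]
  | neg φ ih =>
    simp only [htSat, clSat]
    constructor
    · intro h hc; exact h true le_rfl (ih.mpr hc)
    · intro h u hu; rw [true_le_iff] at hu; subst hu; exact fun hh => h (ih.mp hh)
  | and φ ψ ih1 ih2 => simp [htSat, clSat, ih1, ih2]
  | or φ ψ ih1 ih2 => simp [htSat, clSat, ih1, ih2]
  | imp φ ψ ih1 ih2 =>
    simp only [htSat, clSat]
    constructor
    · intro h hc; exact ih2.mp (h true le_rfl (ih1.mpr hc))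
    · intro h u hu; rw [true_le_iff] at hu; subst hu
      exact fun hh => ih2.mpr (h (ih1.mp hh))

lemma ht_persist (IH IT : Set α) (hsub : IH ⊆ IT) :
    ∀ φ : Form α, htSat IH IT false φ → htSat IH IT true φ := by
  intro φ
  induction φ with
  | top => simp [htSat]
  | bot => simp [htSat]
  | atom a => intro h; simp only [htSat] at h ⊢; simpa using hsub h
  | neg φ ih => intro h u hu; exact h u (Bool.false_le u)
  | and φ ψ ih1 ih2 => intro h; exact ⟨ih1 h.1, ih2 h.2⟩
  | or φ ψ ih1 ih2 => rintro (h | h); exacts [Or.inl (ih1 h), Or.inr (ih2 h)]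
  | imp φ ψ ih1 ih2 => intro h u hu; exact h u (Bool.false_le u)

lemma ht_false_reduct (IH IT : Set α) (hsub : IH ⊆ IT) :
    ∀ φ : Form α, IsExpr φ → (htSat IH IT false φ ↔ clSat IH (reduct IT φ)) := by
  intro φ
  induction φ with
  | top => intro _; simp [htSat, clSat, reduct]
  | bot => intro _; simp [htSat, clSat, reduct]
  | atom a => intro _; simp [htSat, clSat, reduct]
  | neg φ ih =>
    intro he
    simp only [htSat, reduct]
    by_cases hc : clSat IT φ
    · simp only [if_pos hc, clSat]
      constructor
      · intro h; exact absurd ((ht_true IH IT φ).mpr hc) (h true (Bool.false_le true))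
      · exact fun h => h.elim
    · simp only [if_neg hc, clSat]
      constructor
      · intro _; trivial
      · intro _ u _ hu
        cases u
        · exact hc ((ht_true IH IT φ).mp (ht_persist IH IT hsub φ hu))
        · exact hc ((ht_true IH IT φ).mp hu)
  | and φ ψ ih1 ih2 =>
    intro he; simp only [htSat, reduct, clSat, ih1 he.1, ih2 he.2]
  | or φ ψ ih1 ih2 =>
    intro he; simp only [htSat, reduct, clSat, ih1 he.1, ih2 he.2]
  | imp φ ψ ih1 ih2 => intro he; exact absurd he id

lemma ht_rule (IH IT : Set α) (hsub : IH ⊆ IT) (B H : Form α)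
    (hB : IsExpr B) (hH : IsExpr H) :
    htSat IH IT false (.imp B H) ↔
      (clSat IH (.imp (reduct IT B) (reduct IT H)) ∧ clSat IT (.imp B H)) := by
  simp only [htSat, clSat]
  constructor
  · intro h
    refine ⟨fun hb => ?_, fun hb => ?_⟩
    · exact (ht_false_reduct IH IT hsub H hH).mp
        (h false (le_refl _) ((ht_false_reduct IH IT hsub B hB).mpr hb))
    · exact (ht_true IH IT H).mp (h true (Bool.false_le true) ((ht_true IH IT B).mpr hb))
  · rintro ⟨h1, h2⟩ u _ hb
    cases u
    · exact (ht_false_reduct IH IT hsub H hH).mpr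
        (h1 ((ht_false_reduct IH IT hsub B hB).mp hb))
    · exact (ht_true IH IT H).mpr (h2 ((ht_true IH IT B).mp hb))

/-- `⟨IH, IT⟩` is an HT-model of a program `P` iff `IH` is a classical model
of the reduct `P^{IT}` and `IT` is a classical model of `P`. -/
theorem stmt13 {α : Type} (P : Program α) (hfin : P.Finite)
    (hexpr : ExprProg P) (IH IT : Set α) (hsub : IH ⊆ IT) :
    htModelProg IH IT P ↔
      (clModelProg IH (progReduct IT P) ∧ clModelProg IT P) := by
  constructor
  · intro h
    constructor
    · rintro r ⟨s, hs, rfl⟩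
      exact ((ht_rule IH IT hsub s.2 s.1 (hexpr s hs).2 (hexpr s hs).1).mp (h s hs)).1
    · intro r hr
      exact ((ht_rule IH IT hsub r.2 r.1 (hexpr r hr).2 (hexpr r hr).1).mp (h r hr)).2
  · rintro ⟨h1, h2⟩ r hr
    exact (ht_rule IH IT hsub r.2 r.1 (hexpr r hr).2 (hexpr r hr).1).mpr
      ⟨h1 _ ⟨r, hr, rfl⟩, h2 r hr⟩
end

section
/- The replacement of a rule φ ∨ ¬¬p ← ψ by the rule φ ← ψ ∧ ¬p preserves HT-models: the formulas ψ → (φ ∨ ¬¬p) and (ψ ∧ ¬p) → φ are HT-equivalent. -/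
variable {α : Type}

/-- Replacing `φ ∨ ¬¬p ← ψ` by `φ ← ψ ∧ ¬p` preserves HT-models. -/
theorem stmt16 {α : Type} (φ ψ : Form α) (p : α) :
    ∀ IH IT : Set α, IH ⊆ IT →
      (htSat IH IT false (.imp ψ (.or φ (.neg (.neg (.atom p))))) ↔
       htSat IH IT false (.imp (.and ψ (.neg (.atom p))) φ)) := by
  intro IH IT hsub
  have hsub' : p ∈ IH → p ∈ IT := fun h => hsub h
  simp only [htSat, Bool.forall_bool, Bool.le_true, le_refl, Bool.false_le, true_implies,
    forall_true_left, if_true, if_false]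
  tauto
end

section
/- The replacement of a rule φ ← ψ ∧ ¬¬q by the rule φ ∨ ¬q ← ψ preserves HT-models: the formulas (ψ ∧ ¬¬q) → φ and ψ → (φ ∨ ¬q) are HT-equivalent. -/
variable {α : Type}

lemma negAtom_iff {α : Type} (IH IT : Set α) (hsub : IH ⊆ IT) (q : α) (u : Bool) :
    htSat IH IT u (.neg (.atom q)) ↔ q ∉ IT := by
  constructor
  · intro h hq
    exact h true (by simp) (by simpa [htSat] using hq)
  · intro h v _ hv
    cases v with
    | true => exact h (by simpa [htSat] using hv)
    | false => exact h (hsub (by simpa [htSat] using hv))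

lemma negnegAtom_iff {α : Type} (IH IT : Set α) (hsub : IH ⊆ IT) (q : α) (u : Bool) :
    htSat IH IT u (.neg (.neg (.atom q))) ↔ q ∈ IT := by
  constructor
  · intro h
    by_contra hq
    exact h u le_rfl ((negAtom_iff IH IT hsub q u).2 hq)
  · intro hq v _ hv
    exact (negAtom_iff IH IT hsub q v).1 hv hq

/-- Replacing `φ ← ψ ∧ ¬¬q` by `φ ∨ ¬q ← ψ` preserves HT-models. -/
theorem stmt17 {α : Type} (φ ψ : Form α) (q : α) :
    ∀ IH IT : Set α, IH ⊆ IT →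
      (htSat IH IT false (.imp (.and ψ (.neg (.neg (.atom q)))) φ) ↔
       htSat IH IT false (.imp ψ (.or φ (.neg (.atom q))))) := by
  intro IH IT hsub
  constructor
  · intro h u hu hψ
    by_cases hq : q ∈ IT
    · exact Or.inl (h u hu ⟨hψ, (negnegAtom_iff IH IT hsub q u).2 hq⟩)
    · exact Or.inr ((negAtom_iff IH IT hsub q u).2 hq)
  · intro h u hu ⟨hψ, hnn⟩
    have hq := (negnegAtom_iff IH IT hsub q u).1 hnn
    rcases h u hu hψ with hφ | hn
    · exact hφ
    · exact absurd hq ((negAtom_iff IH IT hsub q u).1 hn)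
end

section
/- The polarity-optimized labeling translation fails for answer set semantics: the program Π = {p ←; q ←; r ∨ (p ∧ q) ←} over atoms {p,q,r} has exactly one answer set, namely {p, q}; in particular {p, q, r} is not an answer set of Π. -/
variable {α : Type}

/-- The program {p ←; q ←; r ∨ (p ∧ q) ←} has exactly one answer set, namely
{p, q}; in particular {p, q, r} is not an answer set. -/
theorem stmt19 {α : Type} (p q r : α) (hpq : p ≠ q) (hpr : p ≠ r) (hqr : q ≠ r) :
    isAnswerSet ({p, q} : Set α)
      ({(.atom p, .top), (.atom q, .top),
        (.or (.atom r) (.and (.atom p) (.atom q)), .top)} : Program α) ∧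
    (∀ I : Set α, isAnswerSet I
      ({(.atom p, .top), (.atom q, .top),
        (.or (.atom r) (.and (.atom p) (.atom q)), .top)} : Program α) →
      I = ({p, q} : Set α)) ∧
    ¬ isAnswerSet ({p, q, r} : Set α)
      ({(.atom p, .top), (.atom q, .top),
        (.or (.atom r) (.and (.atom p) (.atom q)), .top)} : Program α) := by

  set P : Program α := {(.atom p, .top), (.atom q, .top),
        (.or (.atom r) (.and (.atom p) (.atom q)), .top)} with hP
  have hred : ∀ I : Set α, progReduct I P = P := by
    intro I
    simp [progReduct, hP, Set.image_insert_eq, Set.image_singleton, reduct]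
  have hcl : ∀ I : Set α, clModelProg I P ↔ (p ∈ I ∧ q ∈ I) := by
    intro I
    constructor
    · intro h
      refine ⟨?_, ?_⟩
      · have := h (.atom p, .top) (by simp [hP])
        simpa [clSat] using this
      · have := h (.atom q, .top) (by simp [hP])
        simpa [clSat] using this
    · rintro ⟨hp, hq⟩ rr hr
      simp only [hP, Set.mem_insert_iff, Set.mem_singleton_iff] at hr
      rcases hr with h | h | h <;> subst h <;> simp [clSat, hp, hq]
  have hAS : isAnswerSet ({p, q} : Set α) P := by
    constructor
    · rw [hred]; exact (hcl _).2 ⟨by simp, by simp⟩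
    · intro J hJ hmod
      rw [hred] at hmod
      obtain ⟨hp, hq⟩ := (hcl J).1 hmod
      exact hJ.2 (by intro x hx; rcases hx with h | h <;> simp_all)
  have huniq : ∀ I : Set α, isAnswerSet I P → I = ({p, q} : Set α) := by
    intro I ⟨hm, hmin⟩
    rw [hred] at hm
    obtain ⟨hp, hq⟩ := (hcl I).1 hm
    by_contra hne
    have hsub : ({p, q} : Set α) ⊆ I := by
      intro x hx; rcases hx with h | h <;> simp_all
    have : ({p, q} : Set α) ⊂ I := ⟨hsub, fun h => hne (subset_antisymm h hsub)⟩
    exact hmin _ this (by rw [hred]; exact (hcl _).2 ⟨by simp, by simp⟩)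
  refine ⟨hAS, huniq, fun h => ?_⟩
  have := huniq _ h
  have hr : r ∈ ({p, q} : Set α) := this ▸ (by simp : r ∈ ({p, q, r} : Set α))
  rcases hr with h | h
  · exact hpr h.symm
  · exact hqr h.symm
end
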